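/- Let Ω ∈ (0,1) be a quadratic irrational whose continued fraction is purely m-periodic, Ω = [ā₁,…,ā_m]. Then the primitive vectors among the resonant convergents v(j) = (−p_j,q_j) are exactly v(1),…,v(m) if a₁ = 1, and exactly v(0),…,v(m−1) if a₁ ≥ 2. -/

import Mathlib

open Real Filter Matrix

noncomputable section

/-- Orbit of the Gauss map `g(x) = {1/x}` starting at `Ω`:
`x₀ = Ω`, `x_{j+1} = g(x_j)`. -/
def gaussOrbit (Ω : ℝ) : ℕ → ℝ
  | 0 => Ω
  | j + 1 => Int.fract (1 / gaussOrbit Ω j)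

/-- `cfA Ω j` is the partial quotient `a_{j+1}` of the continued fraction of `Ω`. -/
def cfA (Ω : ℝ) (j : ℕ) : ℤ := ⌊1 / gaussOrbit Ω j⌋

/-- The matrix `[[a, 1], [1, 0]]`. -/
def Acf (a : ℤ) : Matrix (Fin 2) (Fin 2) ℤ := !![a, 1; 1, 0]

/-- The product `A₁ ⋯ A_m` with `A_i = [[a_i, 1], [1, 0]]`. -/
def cfMatProd (Ω : ℝ) (m : ℕ) : Matrix (Fin 2) (Fin 2) ℤ :=
  ((List.range m).map fun i => Acf (cfA Ω i)).prod

/-- `cfQ Ω (j+1) = q_j`:  `q₋₁ = 0`, `q₀ = 1`, `q_j = a_j q_{j-1} + q_{j-2}`. -/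
def cfQ (Ω : ℝ) : ℕ → ℤ
  | 0 => 0
  | 1 => 1
  | j + 2 => cfA Ω j * cfQ Ω (j + 1) + cfQ Ω j

/-- `cfP Ω (j+1) = p_j`:  `p₋₁ = 1`, `p₀ = 0`, `p_j = a_j p_{j-1} + p_{j-2}`. -/
def cfP (Ω : ℝ) : ℕ → ℤ
  | 0 => 1
  | 1 => 0
  | j + 2 => cfA Ω j * cfP Ω (j + 1) + cfP Ω j

/-- The vector convergent `w(j) = (q_j, p_j)`. -/
def wconv (Ω : ℝ) (j : ℕ) : Fin 2 → ℤ := ![cfQ Ω (j + 1), cfP Ω (j + 1)]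

/-- The resonant convergent `v(j) = (−p_j, q_j)`. -/
def vconv (Ω : ℝ) (j : ℕ) : Fin 2 → ℤ := ![-cfP Ω (j + 1), cfQ Ω (j + 1)]

/-- A quadratic irrational number. -/
def IsQuadraticIrrational (Ω : ℝ) : Prop :=
  Irrational Ω ∧ ∃ A B C : ℤ, A ≠ 0 ∧ (A : ℝ) * Ω ^ 2 + (B : ℝ) * Ω + (C : ℝ) = 0

end
noncomputable section

/-- `⟨k, ω⟩ = k₁ + k₂ Ω` for `ω = (1, Ω)`. -/
def pairω (Ω : ℝ) (k : Fin 2 → ℤ) : ℝ := (k 0 : ℝ) + (k 1 : ℝ) * Ω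

/-- `|k|₁ = |k₁| + |k₂|`. -/
def norm1 (k : Fin 2 → ℤ) : ℤ := |k 0| + |k 1|

/-- `p⁰(q)`: the integer nearest to `qΩ`. -/
def p0 (Ω : ℝ) (q : ℤ) : ℤ := round ((q : ℝ) * Ω)

/-- `k⁰(q) = (−p⁰(q), q)`. -/
def kzero (Ω : ℝ) (q : ℤ) : Fin 2 → ℤ := ![-p0 Ω q, q]

/-- The set `A` of quasi-resonances: vectors `k⁰(q)`, `q ≥ 1`, with `|⟨k,ω⟩| < 1/2`. -/
def inA (Ω : ℝ) (k : Fin 2 → ℤ) : Prop :=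
  ∃ q : ℤ, 1 ≤ q ∧ k = kzero Ω q ∧ |pairω Ω k| < 1 / 2

/-- A quasi-resonance `k` is primitive if `U⁻¹k` is not a quasi-resonance. -/
def PrimitiveVec (Ω : ℝ) (U : Matrix (Fin 2) (Fin 2) ℤ) (k : Fin 2 → ℤ) : Prop :=
  inA Ω k ∧ ¬inA Ω (U⁻¹.mulVec k)

/-- A primitive integer `q ≥ 1`. -/
def PrimitiveInt (Ω : ℝ) (U : Matrix (Fin 2) (Fin 2) ℤ) (q : ℤ) : Prop :=
  1 ≤ q ∧ PrimitiveVec Ω U (kzero Ω q)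

/-- The resonant sequence `s(q, n) = Uⁿ k⁰(q)`. -/
def sres (Ω : ℝ) (U : Matrix (Fin 2) (Fin 2) ℤ) (q : ℤ) (n : ℕ) : Fin 2 → ℤ :=
  (U ^ n).mulVec (kzero Ω q)

/-- `U = σ (T⁻¹)ᵀ` with `σ = det T = (−1)^m` and `T = A₁⋯A_m`. -/
def Umat (Ω : ℝ) (m : ℕ) : Matrix (Fin 2) (Fin 2) ℤ :=
  ((-1 : ℤ) ^ m) • ((cfMatProd Ω m)⁻¹)ᵀ

/-- The numerator `γ_k = |⟨k,ω⟩| · |k|₁`. -/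
def gammaK (Ω : ℝ) (k : Fin 2 → ℤ) : ℝ := |pairω Ω k| * (norm1 k : ℝ)

/-- `K_q = |z_q|(1+Ω)/|c+bΩ²|`, where `z_q = cq + bpΩ`, `p = p⁰(q)`,
and `b, c` are the off-diagonal entries of `T = A₁⋯A_m = [[a,b],[c,d]]`. -/
def KqD (Ω : ℝ) (m : ℕ) (q : ℤ) : ℝ :=
  |(cfMatProd Ω m 1 0 : ℝ) * (q : ℝ) + (cfMatProd Ω m 0 1 : ℝ) * (p0 Ω q : ℝ) * Ω| * (1 + Ω) /
    |(cfMatProd Ω m 1 0 : ℝ) + (cfMatProd Ω m 0 1 : ℝ) * Ω ^ 2|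

/-- The limit numerator `γ*_q = |r_q| K_q` with `r_q = qΩ − p⁰(q)`. -/
def gammaStarQ (Ω : ℝ) (m : ℕ) (q : ℤ) : ℝ :=
  |(q : ℝ) * Ω - (p0 Ω q : ℝ)| * KqD Ω m q

end

/-!
Write `r_j = q_j Ω - p_j = ⟨v(j), ω⟩`. Since `x_j (a_{j+1} + x_{j+1}) = 1`, the recursion for the
convergents gives `r_j = (-1)^j x₀x₁⋯x_j`. These products decrease strictly and `x₀x₁ < 1/2`, so
`v(j)` is a quasi-resonance exactly when `j ≥ 1` or `Ω < 1/2`, and `Ω < 1/2` means `a₁ ≥ 2`.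

Periodicity of the partial quotients gives `T_{m+n} = T_m T_n` for `T_n = A₁⋯A_n`, whose first
column is `(q_n, p_n)`. Since `U = adj(T_m)ᵀ`, this says `U v(j) = v(m+j)`, so `U⁻¹ v(j) = v(j-m)` for
`j ≥ m`. For `j < m`, `U⁻¹ v(j) = σ Tᵀ v(j) = σ (p_m q_j - q_m p_j, p_{m-1} q_j - q_{m-1} p_j)`, and
`(-1)^j (p_n q_j - q_n p_j) = (-1)^j (q_n r_j - q_j r_n) > 0` for `j < n`; according to the parity
of `m - j` the first entry is positive or the second is nonpositive, so `U⁻¹ v(j)` is not a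
quasi-resonance.
-/

open Finset

section GaussMap

variable {Ω : ℝ}

theorem irrational_gaussOrbit (hirr : Irrational Ω) : ∀ j, Irrational (gaussOrbit Ω j)
  | 0 => hirr
  | j + 1 => by
    rw [gaussOrbit, Int.fract, one_div]
    exact (irrational_gaussOrbit hirr j).inv.sub_intCast _

theorem gaussOrbit_pos (h0 : 0 < Ω) (hirr : Irrational Ω) : ∀ j, 0 < gaussOrbit Ω j
  | 0 => h0
  | j + 1 => (Int.fract_nonneg _).lt_of_ne' (irrational_gaussOrbit hirr (j + 1)).ne_zero

theorem gaussOrbit_lt_one (h1 : Ω < 1) : ∀ j, gaussOrbit Ω j < 1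
  | 0 => h1
  | _ + 1 => Int.fract_lt_one _

theorem one_le_cfA (h0 : 0 < Ω) (h1 : Ω < 1) (hirr : Irrational Ω) (j : ℕ) : 1 ≤ cfA Ω j := by
  refine Int.le_floor.2 ?_
  rw [Int.cast_one, le_div_iff₀ (gaussOrbit_pos h0 hirr j), one_mul]
  exact (gaussOrbit_lt_one h1 j).le

theorem gaussOrbit_mul_cfA_add (hirr : Irrational Ω) (j : ℕ) :
    gaussOrbit Ω j * (cfA Ω j + gaussOrbit Ω (j + 1)) = 1 := by
  change gaussOrbit Ω j * (⌊1 / gaussOrbit Ω j⌋ + Int.fract (1 / gaussOrbit Ω j)) = 1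
  rw [Int.floor_add_fract, mul_one_div_cancel (irrational_gaussOrbit hirr j).ne_zero]

theorem gaussOrbit_add_of_periodic {m : ℕ} (hper : gaussOrbit Ω m = Ω) :
    ∀ j, gaussOrbit Ω (m + j) = gaussOrbit Ω j
  | 0 => hper
  | j + 1 => congrArg (fun x => Int.fract (1 / x)) (gaussOrbit_add_of_periodic hper j)

theorem cfA_add_of_periodic {m : ℕ} (hper : gaussOrbit Ω m = Ω) (j : ℕ) :
    cfA Ω (m + j) = cfA Ω j := by
  rw [cfA, cfA, gaussOrbit_add_of_periodic hper]

theorem strictAnti_prod_gaussOrbit (h0 : 0 < Ω) (h1 : Ω < 1) (hirr : Irrational Ω) :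
    StrictAnti fun n => ∏ i ∈ range n, gaussOrbit Ω i :=
  strictAnti_nat_of_succ_lt fun n => by
    rw [prod_range_succ]
    exact mul_lt_of_lt_one_right (prod_pos fun i _ => gaussOrbit_pos h0 hirr i)
      (gaussOrbit_lt_one h1 n)

theorem prod_gaussOrbit_lt_half (h0 : 0 < Ω) (h1 : Ω < 1) (hirr : Irrational Ω) {n : ℕ}
    (hn : 2 ≤ n) : ∏ i ∈ range n, gaussOrbit Ω i < 1 / 2 := by
  refine ((strictAnti_prod_gaussOrbit h0 h1 hirr).antitone hn).trans_lt ?_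
  -- `x₀x₁ < x₀` and `x₀x₁ = 1 - a₁x₀ ≤ 1 - x₀`
  have hkey := gaussOrbit_mul_cfA_add hirr 0
  have ha : (1 : ℝ) ≤ cfA Ω 0 := by exact_mod_cast one_le_cfA h0 h1 hirr 0
  have hx1 := gaussOrbit_lt_one h1 1
  change Ω * (cfA Ω 0 + gaussOrbit Ω 1) = 1 at hkey
  simp only [prod_range_succ, prod_range_zero, one_mul]
  change Ω * gaussOrbit Ω 1 < 1 / 2
  nlinarith

theorem half_lt_of_cfA_zero_eq_one (h0 : 0 < Ω) (ha : cfA Ω 0 = 1) : 1 / 2 < Ω := by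
  have h := (Int.floor_eq_iff.1 ha).2
  change 1 / Ω < ((1 : ℤ) : ℝ) + 1 at h
  rw [div_lt_iff₀ h0] at h
  push_cast at h
  linarith

theorem lt_half_of_two_le_cfA_zero (h0 : 0 < Ω) (hirr : Irrational Ω)
    (ha : 2 ≤ cfA Ω 0) : Ω < 1 / 2 := by
  have h := Int.le_floor.1 ha
  change ((2 : ℤ) : ℝ) ≤ 1 / Ω at h
  rw [le_div_iff₀ h0] at h
  push_cast at h
  exact (by linarith : Ω ≤ 1 / 2).lt_of_ne (by simpa using hirr.ne_rat (1 / 2))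

end GaussMap

section Convergents

variable {Ω : ℝ}

theorem cfQ_nonneg_and_le_succ (ha : ∀ j, 1 ≤ cfA Ω j) :
    ∀ n, 0 ≤ cfQ Ω n ∧ cfQ Ω n ≤ cfQ Ω (n + 1)
  | 0 => ⟨le_rfl, zero_le_one⟩
  | n + 1 => by
    obtain ⟨hq, hle⟩ := cfQ_nonneg_and_le_succ ha n
    have := ha n
    refine ⟨hq.trans hle, ?_⟩
    change cfQ Ω (n + 1) ≤ cfA Ω n * cfQ Ω (n + 1) + cfQ Ω n
    nlinarith

theorem cfQ_monotone (ha : ∀ j, 1 ≤ cfA Ω j) : Monotone (cfQ Ω) :=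
  monotone_nat_of_le_succ fun n => (cfQ_nonneg_and_le_succ ha n).2

theorem one_le_cfQ_succ (ha : ∀ j, 1 ≤ cfA Ω j) (n : ℕ) : 1 ≤ cfQ Ω (n + 1) :=
  cfQ_monotone ha (Nat.le_add_left 1 n)

theorem cfQ_mul_sub_cfP (hirr : Irrational Ω) :
    ∀ n, (cfQ Ω n : ℝ) * Ω - cfP Ω n = (-1) ^ (n + 1) * ∏ i ∈ range n, gaussOrbit Ω i
  | 0 => by simp [cfQ, cfP]
  | 1 => by simp [cfQ, cfP, gaussOrbit]
  | n + 2 => by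
    have hn := cfQ_mul_sub_cfP hirr n
    have hn1 := cfQ_mul_sub_cfP hirr (n + 1)
    have hkey := gaussOrbit_mul_cfA_add hirr n
    simp only [cfQ, cfP, Int.cast_add, Int.cast_mul, prod_range_succ] at hn1 ⊢
    linear_combination (cfA Ω n : ℝ) * hn1 + hn
      + (-1) ^ n * (∏ i ∈ range n, gaussOrbit Ω i) * hkey

theorem pairω_vconv (hirr : Irrational Ω) (j : ℕ) :
    pairω Ω (vconv Ω j) = (-1) ^ j * ∏ i ∈ range (j + 1), gaussOrbit Ω i := by
  have h := cfQ_mul_sub_cfP hirr (j + 1)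
  simp only [pairω, vconv, cons_val_zero, cons_val_one, Int.cast_neg] at h ⊢
  linear_combination h

theorem neg_one_pow_mul_cfP_mul_cfQ_sub_pos (h0 : 0 < Ω) (h1 : Ω < 1) (hirr : Irrational Ω)
    {j n : ℕ} (hjn : j < n) :
    0 < (-1) ^ j * (cfP Ω (n + 1) * cfQ Ω (j + 1) - cfQ Ω (n + 1) * cfP Ω (j + 1)) := by
  have ha := one_le_cfA h0 h1 hirr
  have hp (i : ℕ) : (cfP Ω (i + 1) : ℝ) =
      cfQ Ω (i + 1) * Ω - (-1) ^ i * ∏ k ∈ range (i + 1), gaussOrbit Ω k := by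
    rw [← pairω_vconv hirr]
    simp [pairω, vconv]
  have hqj : (1 : ℝ) ≤ cfQ Ω (j + 1) := by exact_mod_cast one_le_cfQ_succ ha j
  have hqn : (cfQ Ω (j + 1) : ℝ) ≤ cfQ Ω (n + 1) := by exact_mod_cast cfQ_monotone ha (by omega)
  have hPn : 0 < ∏ k ∈ range (n + 1), gaussOrbit Ω k :=
    prod_pos fun i _ => gaussOrbit_pos h0 hirr i
  have hPj : ∏ k ∈ range (n + 1), gaussOrbit Ω k < ∏ k ∈ range (j + 1), gaussOrbit Ω k :=
    strictAnti_prod_gaussOrbit h0 h1 hirr (by omega)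
  have hdom := mul_lt_mul' hqn hPj hPn.le (by linarith)
  suffices (0 : ℝ) < (-1) ^ j * (cfP Ω (n + 1) * cfQ Ω (j + 1) - cfQ Ω (n + 1) * cfP Ω (j + 1)) by
    exact_mod_cast this
  rw [hp n, hp j]
  rcases neg_one_pow_eq_or ℝ j with hj | hj <;> rcases neg_one_pow_eq_or ℝ n with hn | hn <;>
    rw [hj, hn] <;> nlinarith

theorem neg_one_pow_mul_cfP_mul_cfQ_sub_nonneg (h0 : 0 < Ω) (h1 : Ω < 1) (hirr : Irrational Ω)
    {j n : ℕ} (hjn : j ≤ n) :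
    0 ≤ (-1) ^ j * (cfP Ω (n + 1) * cfQ Ω (j + 1) - cfQ Ω (n + 1) * cfP Ω (j + 1)) := by
  rcases hjn.lt_or_eq with hlt | rfl
  · exact (neg_one_pow_mul_cfP_mul_cfQ_sub_pos h0 h1 hirr hlt).le
  · rw [mul_comm (cfP Ω _), sub_self, mul_zero]

end Convergents

section Matrices

variable {R ι : Type*} [CommRing R] [Fintype ι] [DecidableEq ι]

theorem Matrix.transpose_adjugate_mul_smul_transpose {T : Matrix ι ι R} {σ : R}
    (hσ : σ * σ = 1) (hdet : T.det = σ) : T.adjugateᵀ * (σ • Tᵀ) = 1 := by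
  rw [Matrix.mul_smul, ← transpose_mul, mul_adjugate, hdet, transpose_smul, transpose_one,
    smul_smul, hσ, one_smul]

theorem Matrix.smul_transpose_inv_of_det_eq {T : Matrix ι ι R} {σ : R}
    (hσ : σ * σ = 1) (hdet : T.det = σ) : σ • T⁻¹ᵀ = T.adjugateᵀ := by
  have hinv : T⁻¹ = σ • T.adjugate :=
    inv_eq_right_inv (by rw [Matrix.mul_smul, mul_adjugate, hdet, smul_smul, hσ, one_smul])
  rw [hinv, transpose_smul, smul_smul, hσ, one_smul]

theorem Matrix.transpose_fin_two_of {α : Type*} (a b c d : α) :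
    !![a, b; c, d]ᵀ = !![a, c; b, d] := by
  ext i j; fin_cases i <;> fin_cases j <;> rfl

theorem Matrix.fin_two_of_mulVec {α : Type*} [NonUnitalNonAssocSemiring α] (a b c d x y : α) :
    !![a, b; c, d] *ᵥ ![x, y] = ![a * x + b * y, c * x + d * y] := by
  ext i; fin_cases i <;> simp [mulVec]

end Matrices

section Periodic

variable {Ω : ℝ} {m : ℕ}

theorem cfMatProd_succ (Ω : ℝ) (n : ℕ) : cfMatProd Ω (n + 1) = cfMatProd Ω n * Acf (cfA Ω n) := by
  simp [cfMatProd, List.range_succ]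

theorem cfMatProd_eq (Ω : ℝ) (n : ℕ) :
    cfMatProd Ω n = !![cfQ Ω (n + 1), cfQ Ω n; cfP Ω (n + 1), cfP Ω n] := by
  induction n with
  | zero => ext i j; fin_cases i <;> fin_cases j <;> rfl
  | succ n ih =>
    rw [cfMatProd_succ, ih, Acf, mul_fin_two]
    simp only [cfQ, cfP, mul_one, one_mul, mul_zero, add_zero, mul_comm]

theorem det_cfMatProd (Ω : ℝ) (n : ℕ) : (cfMatProd Ω n).det = (-1) ^ n := by
  induction n with
  | zero => simp [cfMatProd]
  | succ n ih => rw [cfMatProd_succ, det_mul, ih, Acf, det_fin_two_of, pow_succ]; ring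

theorem cfMatProd_add_of_periodic (hper : gaussOrbit Ω m = Ω) (n : ℕ) :
    cfMatProd Ω (m + n) = cfMatProd Ω m * cfMatProd Ω n := by
  induction n with
  | zero => simp [cfMatProd]
  | succ n ih =>
    rw [← add_assoc, cfMatProd_succ, ih, cfMatProd_succ, mul_assoc, cfA_add_of_periodic hper]

theorem Umat_eq_transpose_adjugate (Ω : ℝ) (m : ℕ) : Umat Ω m = (cfMatProd Ω m).adjugateᵀ :=
  smul_transpose_inv_of_det_eq (pow_mul_pow_eq_one m rfl) (det_cfMatProd Ω m)

theorem Umat_inv (Ω : ℝ) (m : ℕ) : (Umat Ω m)⁻¹ = (-1) ^ m • (cfMatProd Ω m)ᵀ := by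
  rw [Umat_eq_transpose_adjugate]
  exact inv_eq_right_inv
    (transpose_adjugate_mul_smul_transpose (pow_mul_pow_eq_one m rfl) (det_cfMatProd Ω m))

theorem Umat_inv_mul_Umat (Ω : ℝ) (m : ℕ) : (Umat Ω m)⁻¹ * Umat Ω m = 1 := by
  rw [Umat_inv, Umat_eq_transpose_adjugate]
  exact mul_eq_one_comm.1
    (transpose_adjugate_mul_smul_transpose (pow_mul_pow_eq_one m rfl) (det_cfMatProd Ω m))

theorem Umat_mulVec_vconv (hper : gaussOrbit Ω m = Ω) (j : ℕ) :
    Umat Ω m *ᵥ vconv Ω j = vconv Ω (m + j) := by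
  have h := cfMatProd_add_of_periodic hper j
  have hq := congrFun₂ h 0 0
  have hp := congrFun₂ h 1 0
  simp only [cfMatProd_eq, mul_fin_two, of_apply, cons_val', cons_val_zero,
    cons_val_one, empty_val', cons_val_fin_one] at hq hp
  rw [Umat_eq_transpose_adjugate, cfMatProd_eq, adjugate_fin_two_of, transpose_fin_two_of, vconv,
    vconv, fin_two_of_mulVec, hq, hp]
  exact vec2_eq (by ring) (by ring)

theorem Umat_inv_mulVec_vconv_add (hper : gaussOrbit Ω m = Ω) (j : ℕ) :
    (Umat Ω m)⁻¹ *ᵥ vconv Ω (m + j) = vconv Ω j := by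
  rw [← Umat_mulVec_vconv hper, mulVec_mulVec, Umat_inv_mul_Umat, one_mulVec]

end Periodic

section QuasiResonances

variable {Ω : ℝ} {m : ℕ}

theorem not_inA_of_pos_fst (h0 : 0 < Ω) {k : Fin 2 → ℤ} (hk : 0 < k 0) : ¬inA Ω k := by
  rintro ⟨q, hq, rfl, -⟩
  have : 0 ≤ p0 Ω q := by
    rw [p0, round_eq]
    exact Int.floor_nonneg.2 (by positivity)
  simp only [kzero, cons_val_zero] at hk
  omega

theorem not_inA_of_snd_nonpos {k : Fin 2 → ℤ} (hk : k 1 ≤ 0) : ¬inA Ω k := by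
  rintro ⟨q, hq, rfl, -⟩
  simp only [kzero, cons_val_one, cons_val_zero] at hk
  omega

theorem inA_vconv_iff (h0 : 0 < Ω) (h1 : Ω < 1) (hirr : Irrational Ω) (j : ℕ) :
    inA Ω (vconv Ω j) ↔ |pairω Ω (vconv Ω j)| < 1 / 2 := by
  refine ⟨fun ⟨_, _, _, h⟩ => h, fun h => ⟨cfQ Ω (j + 1),
    one_le_cfQ_succ (one_le_cfA h0 h1 hirr) j, ?_, h⟩⟩
  have hround : p0 Ω (cfQ Ω (j + 1)) = cfP Ω (j + 1) := by
    simp only [pairω, vconv, cons_val_zero, cons_val_one, Int.cast_neg, abs_lt] at h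
    rw [p0, round_eq_iff, Set.mem_Ico]
    constructor <;> linarith
  ext i; fin_cases i <;> simp [vconv, kzero, hround]

theorem abs_pairω_vconv_lt_half_iff (h0 : 0 < Ω) (h1 : Ω < 1) (hirr : Irrational Ω) (j : ℕ) :
    |pairω Ω (vconv Ω j)| < 1 / 2 ↔ 1 ≤ j ∨ Ω < 1 / 2 := by
  rw [pairω_vconv hirr, abs_mul, abs_neg_one_pow, one_mul,
    abs_of_pos (prod_pos fun i _ => gaussOrbit_pos h0 hirr i)]
  rcases j with _ | j
  · simp [gaussOrbit]
  · exact iff_of_true (prod_gaussOrbit_lt_half h0 h1 hirr (by omega)) (Or.inl (by omega))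

theorem not_inA_Umat_inv_mulVec_vconv (h0 : 0 < Ω) (h1 : Ω < 1) (hirr : Irrational Ω) {j : ℕ}
    (hj : j < m) : ¬inA Ω ((Umat Ω m)⁻¹ *ᵥ vconv Ω j) := by
  obtain ⟨d, rfl⟩ : ∃ d, m = j + (d + 1) := ⟨m - j - 1, by omega⟩
  rw [Umat_inv, cfMatProd_eq, transpose_fin_two_of, smul_mulVec, vconv, fin_two_of_mulVec, pow_add]
  rcases Nat.even_or_odd (d + 1) with hd | hd
  · apply not_inA_of_pos_fst h0
    rw [hd.neg_one_pow, mul_one, Pi.smul_apply, cons_val_zero, smul_eq_mul]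
    convert neg_one_pow_mul_cfP_mul_cfQ_sub_pos h0 h1 hirr (n := j + (d + 1)) (by omega) using 2
    ring
  · apply not_inA_of_snd_nonpos
    have := neg_one_pow_mul_cfP_mul_cfQ_sub_nonneg h0 h1 hirr (j := j) (n := j + d) (by omega)
    rw [add_assoc j d 1] at this
    rw [hd.neg_one_pow, Pi.smul_apply, cons_val_one, cons_val_zero, smul_eq_mul]
    linarith

theorem primitiveVec_vconv_iff (h0 : 0 < Ω) (h1 : Ω < 1) (hirr : Irrational Ω)
    (hper : gaussOrbit Ω m = Ω) (j : ℕ) :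
    PrimitiveVec Ω (Umat Ω m) (vconv Ω j) ↔
      inA Ω (vconv Ω j) ∧ (j < m ∨ ¬inA Ω (vconv Ω (j - m))) := by
  refine and_congr_right fun _ => ?_
  rcases lt_or_ge j m with hj | hj
  · exact iff_of_true (not_inA_Umat_inv_mulVec_vconv h0 h1 hirr hj) (Or.inl hj)
  · obtain ⟨i, rfl⟩ := Nat.exists_eq_add_of_le hj
    rw [Umat_inv_mulVec_vconv_add hper, Nat.add_sub_cancel_left]
    simp

end QuasiResonances

theorem splitting_quadratic_stmt5_general
    (Ω : ℝ) (m : ℕ) (h0 : 0 < Ω) (h1 : Ω < 1)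
    (hquad : IsQuadraticIrrational Ω)
    (hper : gaussOrbit Ω m = Ω) :
    (cfA Ω 0 = 1 →
      ∀ j : ℕ, PrimitiveVec Ω (Umat Ω m) (vconv Ω j) ↔ (1 ≤ j ∧ j ≤ m)) ∧
    (2 ≤ cfA Ω 0 →
      ∀ j : ℕ, PrimitiveVec Ω (Umat Ω m) (vconv Ω j) ↔ j < m) := by
  have hirr := hquad.1
  have hprim (j : ℕ) : PrimitiveVec Ω (Umat Ω m) (vconv Ω j) ↔
      (1 ≤ j ∨ Ω < 1 / 2) ∧ (j < m ∨ ¬(1 ≤ j - m ∨ Ω < 1 / 2)) := by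
    simp only [primitiveVec_vconv_iff h0 h1 hirr hper, inA_vconv_iff h0 h1 hirr,
      abs_pairω_vconv_lt_half_iff h0 h1 hirr]
  refine ⟨fun ha j => ?_, fun ha j => ?_⟩
  · simp only [hprim, (half_lt_of_cfA_zero_eq_one h0 ha).not_gt, or_false]
    omega
  · simp only [hprim, lt_half_of_two_le_cfA_zero h0 hirr ha, or_true, not_true_eq_false,
      or_false, true_and]

/-- Lemma 2(b): for `Ω ∈ (0,1)` a quadratic irrational with purely `m`-periodic
continued fraction, the primitive vectors among the resonant convergents `v(j)` are
exactly `v(1),…,v(m)` if `a₁ = 1`, and exactly `v(0),…,v(m−1)` if `a₁ ≥ 2`. -/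
theorem splitting_quadratic_stmt5
    (Ω : ℝ) (m : ℕ) (hm : 1 ≤ m) (h0 : 0 < Ω) (h1 : Ω < 1)
    (hquad : IsQuadraticIrrational Ω)
    (hper : gaussOrbit Ω m = Ω) :
    (cfA Ω 0 = 1 →
      ∀ j : ℕ, PrimitiveVec Ω (Umat Ω m) (vconv Ω j) ↔ (1 ≤ j ∧ j ≤ m)) ∧
    (2 ≤ cfA Ω 0 →
      ∀ j : ℕ, PrimitiveVec Ω (Umat Ω m) (vconv Ω j) ↔ j < m) :=
  splitting_quadratic_stmt5_general Ω m h0 h1 hquad hper
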